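/- Let (X, 𝒜, μ) be a probability space, U > 0, and let m₁, m₂ : X → ℝ be measurable functions with sup_x |m₁(x)| ≤ U and sup_x |m₂(x)| ≤ U. Set c_U = (1 + U²)^{−1/2}. Define K = ∫_X ∫_ℝ p_{m₁} log(p_{m₁}/p_{m₂}) dy dμ(x) and V = ∫_X ∫_ℝ p_{m₁} (log(p_{m₁}/p_{m₂}))² dy dμ(x), where p_m(y,x) = (2π)^{−1/2} exp(−(y − m(x))²/2). Then for every ε > 0: if ( ∫_X (m₁ − m₂)² dμ )^{1/2} ≤ c_U · ε, then K ≤ ε² and V ≤ ε². -/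

import Mathlib

/-!
With `a = m₁ - m₂`, the log-likelihood ratio `log (p_{m₁} / p_{m₂})` at `y` equals
`a (y - m₁) + a² / 2`, an affine function of a standard Gaussian variable under `P_{m₁}`.
Its first two moments give `K = ∫ a² / 2 dμ` and `V = ∫ (a² + a⁴ / 4) dμ`, and `|a| ≤ 2U`
bounds the latter by `(1 + U²) ∫ a² dμ`.
-/

open MeasureTheory

/-- The Gaussian regression density with mean `m`: `y ↦ (2π)^{-1/2} exp(-(y-m)²/2)`. -/
noncomputable def gaussDensity (m y : ℝ) : ℝ :=
  (Real.sqrt (2 * Real.pi))⁻¹ * Real.exp (-(y - m) ^ 2 / 2)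

namespace ProbabilityTheory

variable {m : ℝ} {v : NNReal}

lemma integrable_sub_mean_gaussianReal : Integrable (fun y ↦ y - m) (gaussianReal m v) :=
  ((memLp_id_gaussianReal 1).sub (memLp_const m)).integrable le_rfl

lemma integrable_sub_mean_sq_gaussianReal : Integrable (fun y ↦ (y - m) ^ 2) (gaussianReal m v) :=
  ((memLp_id_gaussianReal 2).sub (memLp_const m)).integrable_sq

lemma integral_sub_mean_gaussianReal : ∫ y, (y - m) ∂gaussianReal m v = 0 := by
  rw [integral_sub (f := fun y ↦ y) ((memLp_id_gaussianReal 1).integrable le_rfl)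
    (integrable_const m)]
  simp

lemma integral_sub_mean_sq_gaussianReal : ∫ y, (y - m) ^ 2 ∂gaussianReal m v = v := by
  simpa using (variance_eq_integral (μ := gaussianReal m v) measurable_id.aemeasurable).symm

end ProbabilityTheory

open ProbabilityTheory

lemma gaussDensity_eq_gaussianPDFReal (m : ℝ) : gaussDensity m = gaussianPDFReal m 1 := by
  ext y
  simp [gaussDensity, gaussianPDFReal]

lemma integral_gaussDensity_mul (m : ℝ) (f : ℝ → ℝ) :
    ∫ y, gaussDensity m y * f y = ∫ y, f y ∂gaussianReal m 1 := by
  simp [integral_gaussianReal_eq_integral_smul, gaussDensity_eq_gaussianPDFReal]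

lemma log_gaussDensity_div (m₁ m₂ y : ℝ) :
    Real.log (gaussDensity m₁ y / gaussDensity m₂ y)
      = (m₁ - m₂) * (y - m₁) + (m₁ - m₂) ^ 2 / 2 := by
  unfold gaussDensity
  rw [mul_div_mul_left _ _ (by positivity), ← Real.exp_sub, Real.log_exp]
  ring

lemma integral_gaussDensity_mul_log_div (m₁ m₂ : ℝ) :
    ∫ y, gaussDensity m₁ y * Real.log (gaussDensity m₁ y / gaussDensity m₂ y)
      = (m₁ - m₂) ^ 2 / 2 := by
  simp_rw [integral_gaussDensity_mul, log_gaussDensity_div]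
  rw [integral_add (integrable_sub_mean_gaussianReal.const_mul _) (integrable_const _),
    integral_const_mul, integral_sub_mean_gaussianReal]
  simp

lemma integral_gaussDensity_mul_log_div_sq (m₁ m₂ : ℝ) :
    ∫ y, gaussDensity m₁ y * Real.log (gaussDensity m₁ y / gaussDensity m₂ y) ^ 2
      = (m₁ - m₂) ^ 2 + (m₁ - m₂) ^ 4 / 4 := by
  have hexpand : ∀ a y, (a * (y - m₁) + a ^ 2 / 2) ^ 2
      = a ^ 2 * (y - m₁) ^ 2 + (a ^ 3 * (y - m₁) + a ^ 4 / 4) := fun a y ↦ by ring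
  simp_rw [integral_gaussDensity_mul, log_gaussDensity_div, hexpand]
  rw [integral_add (integrable_sub_mean_sq_gaussianReal.const_mul _)
      ((integrable_sub_mean_gaussianReal.const_mul _).fun_add (integrable_const _)),
    integral_add (integrable_sub_mean_gaussianReal.const_mul _) (integrable_const _),
    integral_const_mul, integral_const_mul, integral_sub_mean_sq_gaussianReal,
    integral_sub_mean_gaussianReal]
  simp

lemma integral_sq_add_pow_four_div_four_le {X : Type*} [MeasurableSpace X] {μ : Measure X}
    [IsFiniteMeasure μ] {f : X → ℝ} {U : ℝ} (hf : AEStronglyMeasurable f μ)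
    (hfU : ∀ᵐ x ∂μ, |f x| ≤ 2 * U) :
    ∫ x, (f x ^ 2 + f x ^ 4 / 4) ∂μ ≤ (1 + U ^ 2) * ∫ x, f x ^ 2 ∂μ := by
  have hsq : ∀ᵐ x ∂μ, f x ^ 2 ≤ 4 * U ^ 2 := hfU.mono fun x hx ↦ by
    nlinarith [sq_abs (f x), abs_nonneg (f x)]
  have hint : Integrable (fun x ↦ f x ^ 2) μ :=
    .of_bound (hf.pow 2) (4 * U ^ 2) (hsq.mono fun x hx ↦ by simpa using hx)
  rw [← integral_const_mul]
  refine integral_mono_of_nonneg (.of_forall fun x ↦ by positivity) (hint.const_mul _) ?_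
  filter_upwards [hsq] with x hx
  nlinarith [sq_nonneg (f x)]

theorem KL_neighbourhood_contains_prediction_ball_general {X : Type*} [MeasurableSpace X]
    (μ : Measure X) [IsProbabilityMeasure μ]
    (U : ℝ)
    (m₁ m₂ : X → ℝ) (hm₁ : Measurable m₁) (hm₂ : Measurable m₂)
    (hb₁ : ∀ x, |m₁ x| ≤ U) (hb₂ : ∀ x, |m₂ x| ≤ U) :
    ∀ ε : ℝ, 0 < ε →
      Real.sqrt (∫ x, (m₁ x - m₂ x) ^ 2 ∂μ) ≤ (Real.sqrt (1 + U ^ 2))⁻¹ * ε →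
      (∫ x, (∫ y, gaussDensity (m₁ x) y *
          Real.log (gaussDensity (m₁ x) y / gaussDensity (m₂ x) y)) ∂μ ≤ ε ^ 2 ∧
       ∫ x, (∫ y, gaussDensity (m₁ x) y *
          (Real.log (gaussDensity (m₁ x) y / gaussDensity (m₂ x) y)) ^ 2) ∂μ ≤ ε ^ 2) := by
  intro ε _ hball
  have hdiff : ∀ x, |m₁ x - m₂ x| ≤ 2 * U := fun x ↦
    (abs_sub _ _).trans (by linarith [hb₁ x, hb₂ x])
  have hL2 : (1 + U ^ 2) * ∫ x, (m₁ x - m₂ x) ^ 2 ∂μ ≤ ε ^ 2 := by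
    have h := (Real.sqrt_le_iff.mp hball).2
    rw [mul_pow, inv_pow, Real.sq_sqrt (by positivity)] at h
    rwa [inv_mul_eq_div, le_div_iff₀' (by positivity)] at h
  have hV := integral_sq_add_pow_four_div_four_le (μ := μ)
    (hm₁.sub hm₂).aestronglyMeasurable (.of_forall hdiff)
  simp only [integral_gaussDensity_mul_log_div, integral_gaussDensity_mul_log_div_sq]
  refine ⟨?_, hV.trans hL2⟩
  rw [integral_div]
  have hL2_nonneg := integral_nonneg (μ := μ) (f := fun x ↦ (m₁ x - m₂ x) ^ 2) fun x ↦ sq_nonneg _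
  nlinarith

/-- On models uniformly bounded by `U`, the Kullback–Leibler neighbourhood
`𝓑₂(P_{m₁}, ε)` contains the `L²(μ)`-prediction-risk ball of radius `c_U ε` around `m₁`,
where `c_U = (1 + U²)^{-1/2}`: if `‖m₁ - m₂‖_{L²(μ)} ≤ c_U ε` then both the
Kullback–Leibler divergence and the Kullback–Leibler variation are at most `ε²`. -/
theorem KL_neighbourhood_contains_prediction_ball {X : Type*} [MeasurableSpace X]
    (μ : Measure X) [IsProbabilityMeasure μ]
    (U : ℝ) (hU : 0 < U)
    (m₁ m₂ : X → ℝ) (hm₁ : Measurable m₁) (hm₂ : Measurable m₂)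
    (hb₁ : ∀ x, |m₁ x| ≤ U) (hb₂ : ∀ x, |m₂ x| ≤ U) :
    ∀ ε : ℝ, 0 < ε →
      Real.sqrt (∫ x, (m₁ x - m₂ x) ^ 2 ∂μ) ≤ (Real.sqrt (1 + U ^ 2))⁻¹ * ε →
      (∫ x, (∫ y, gaussDensity (m₁ x) y *
          Real.log (gaussDensity (m₁ x) y / gaussDensity (m₂ x) y)) ∂μ ≤ ε ^ 2 ∧
       ∫ x, (∫ y, gaussDensity (m₁ x) y *
          (Real.log (gaussDensity (m₁ x) y / gaussDensity (m₂ x) y)) ^ 2) ∂μ ≤ ε ^ 2) :=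
  KL_neighbourhood_contains_prediction_ball_general μ U m₁ m₂ hm₁ hm₂ hb₁ hb₂
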